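/- arXiv:2208.00691 — 9 statements merged into one kernel-verified Lean document; each statement's English description precedes it below -/
import Mathlib

section
/- In a semilattice whose induced order is a distributive lattice, a filter F is meet irreducible in the lattice of filters if and only if it is prime, i.e., A ∖ F is nonempty and closed under binary joins. -/
/-- A filter of a meet-semilattice: a nonempty upset closed under binary meets. -/
def IsSLFilter {A : Type*} [SemilatticeInf A] (F : Set A) : Prop :=
  F.Nonempty ∧ (∀ a b : A, a ∈ F → a ≤ b → b ∈ F) ∧
    (∀ a b : A, a ∈ F → b ∈ F → a ⊓ b ∈ F)

/-- In a semilattice whose induced order is a distributive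
lattice, a filter `F` is meet irreducible in the lattice of filters (proper,
and `F = G ∩ H` implies `F = G` or `F = H`) iff it is prime, i.e., `A ∖ F`
is nonempty and closed under binary joins. -/
theorem stmt7 {A : Type*} [DistribLattice A] (F : Set A) (hF : IsSLFilter F) :
    (F ≠ Set.univ ∧
      ∀ G H : Set A, IsSLFilter G → IsSLFilter H → F = G ∩ H → F = G ∨ F = H) ↔
    (Fᶜ.Nonempty ∧ ∀ a b : A, a ∉ F → b ∉ F → a ⊔ b ∉ F) := by
  obtain ⟨hne, hup, hmeet⟩ := hF
  constructor
  · rintro ⟨hproper, hirr⟩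
    constructor
    · rcases Set.ne_univ_iff_exists_notMem F |>.mp hproper with ⟨a, ha⟩
      exact ⟨a, ha⟩
    · intro a b ha hb hab
      set G : Set A := {x | ∃ f ∈ F, f ⊓ a ≤ x} with hG
      set H : Set A := {x | ∃ f ∈ F, f ⊓ b ≤ x} with hH
      have hGfil : IsSLFilter G := by
        refine ⟨⟨a, a ⊔ b, hab, inf_le_right⟩, ?_, ?_⟩
        · rintro x y ⟨f, hf, hfx⟩ hxy; exact ⟨f, hf, hfx.trans hxy⟩
        · rintro x y ⟨f, hf, hfx⟩ ⟨g, hg, hgy⟩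
          refine ⟨f ⊓ g, hmeet f g hf hg, le_inf ?_ ?_⟩
          · exact le_trans (inf_le_inf_right a inf_le_left) hfx
          · exact le_trans (inf_le_inf_right a inf_le_right) hgy
      have hHfil : IsSLFilter H := by
        refine ⟨⟨b, a ⊔ b, hab, inf_le_right⟩, ?_, ?_⟩
        · rintro x y ⟨f, hf, hfx⟩ hxy; exact ⟨f, hf, hfx.trans hxy⟩
        · rintro x y ⟨f, hf, hfx⟩ ⟨g, hg, hgy⟩
          refine ⟨f ⊓ g, hmeet f g hf hg, le_inf ?_ ?_⟩
          · exact le_trans (inf_le_inf_right b inf_le_left) hfx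
          · exact le_trans (inf_le_inf_right b inf_le_right) hgy
      have hFGH : F = G ∩ H := by
        apply Set.eq_of_subset_of_subset
        · intro x hx
          exact ⟨⟨x, hx, inf_le_left⟩, ⟨x, hx, inf_le_left⟩⟩
        · rintro x ⟨⟨f, hf, hfx⟩, ⟨g, hg, hgx⟩⟩
          have key : (f ⊓ g) ⊓ (a ⊔ b) ≤ x := by
            rw [inf_sup_left]
            refine sup_le ?_ ?_
            · exact le_trans (inf_le_inf_right a inf_le_left) hfx
            · exact le_trans (inf_le_inf_right b inf_le_right) hgx
          exact hup _ _ (hmeet _ _ (hmeet f g hf hg) hab) key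
      rcases hirr G H hGfil hHfil hFGH with h | h
      · exact ha (h ▸ ⟨a ⊔ b, hab, inf_le_right⟩)
      · exact hb (h ▸ ⟨a ⊔ b, hab, inf_le_right⟩)
  · rintro ⟨⟨c, hc⟩, hprime⟩
    constructor
    · intro h; exact hc (h ▸ Set.mem_univ c)
    · intro G H hG hH hFGH
      by_contra hcon
      push_neg at hcon
      obtain ⟨hFG, hFH⟩ := hcon
      have hFsubG : F ⊆ G := fun x hx => (hFGH ▸ hx).1
      have hFsubH : F ⊆ H := fun x hx => (hFGH ▸ hx).2
      obtain ⟨g, hgG, hgF⟩ : ∃ g, g ∈ G ∧ g ∉ F := by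
        by_contra h; push_neg at h
        exact hFG (Set.eq_of_subset_of_subset hFsubG h)
      obtain ⟨h, hhH, hhF⟩ : ∃ h, h ∈ H ∧ h ∉ F := by
        by_contra h; push_neg at h
        exact hFH (Set.eq_of_subset_of_subset hFsubH h)
      have : g ⊔ h ∈ F := by
        rw [hFGH]
        exact ⟨hG.2.1 g _ hgG le_sup_left, hH.2.1 h _ hhH le_sup_right⟩
      exact hprime g h hgF hhF this
end

section
/- Let f : A → B be a semilattice homomorphism, F a filter of B, and G a meet-irreducible filter of A. If f⁻¹[F] ⊆ G and the filter of B generated by F ∪ f[G] is disjoint from f[A ∖ G], then there exists a meet-irreducible filter H of B such that F ⊆ H and G = f⁻¹[H]. -/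
/-- A meet-irreducible filter: a proper filter that is not the intersection of
two filters other than itself. -/
def IsMeetIrredFilter {A : Type*} [SemilatticeInf A] (F : Set A) : Prop :=
  IsSLFilter F ∧ F ≠ Set.univ ∧
    ∀ G H : Set A, IsSLFilter G → IsSLFilter H → F = G ∩ H → F = G ∨ F = H

/-- The filter generated by a set: all elements above a finite meet of
elements of the set. -/
def filterGen {A : Type*} [SemilatticeInf A] (X : Set A) : Set A :=
  {b | ∃ s : Finset A, ∃ hs : s.Nonempty, ↑s ⊆ X ∧ s.inf' hs id ≤ b}

lemma filterGen_isFilter {A : Type*} [SemilatticeInf A] {X : Set A}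
    (hX : X.Nonempty) : IsSLFilter (filterGen X) := by
  classical
  obtain ⟨x, hx⟩ := hX
  refine ⟨⟨x, {x}, ⟨x, Finset.mem_singleton_self x⟩, by simpa, by simp⟩, ?_, ?_⟩
  · rintro a b ⟨s, hs, hsX, hle⟩ hab
    exact ⟨s, hs, hsX, hle.trans hab⟩
  · rintro a b ⟨s, hs, hsX, hle⟩ ⟨t, ht, htX, hle'⟩
    refine ⟨s ∪ t, hs.mono Finset.subset_union_left, ?_, le_inf ?_ ?_⟩
    · push_cast; exact Set.union_subset hsX htX
    · exact le_trans (Finset.inf'_mono _ Finset.subset_union_left hs) hle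
    · exact le_trans (Finset.inf'_mono _ Finset.subset_union_right ht) hle'

lemma subset_filterGen {A : Type*} [SemilatticeInf A] {X : Set A} :
    X ⊆ filterGen X := fun x hx =>
  ⟨{x}, ⟨x, Finset.mem_singleton_self x⟩, by simpa, by simp⟩

/-- Let `f : A → B` be a semilattice homomorphism, `F` a filter
of `B`, and `G` a meet-irreducible filter of `A`. If `f⁻¹[F] ⊆ G` and the
filter of `B` generated by `F ∪ f[G]` is disjoint from `f[A ∖ G]`, then there
is a meet-irreducible filter `H` of `B` with `F ⊆ H` and `G = f⁻¹[H]`. -/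
theorem stmt8 {A B : Type*} [SemilatticeInf A] [SemilatticeInf B] (f : A → B)
    (hf : ∀ a b : A, f (a ⊓ b) = f a ⊓ f b)
    (F : Set B) (hF : IsSLFilter F)
    (G : Set A) (hG : IsMeetIrredFilter G)
    (h1 : f ⁻¹' F ⊆ G)
    (h2 : Disjoint (filterGen (F ∪ f '' G)) (f '' Gᶜ)) :
    ∃ H : Set B, IsMeetIrredFilter H ∧ F ⊆ H ∧ G = f ⁻¹' H := by
  obtain ⟨hGfil, hGprop, hGirr⟩ := hG
  obtain ⟨hGne, hGup, hGinf⟩ := hGfil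
  set F₀ : Set B := filterGen (F ∪ f '' G) with hF₀def
  have hF₀fil : IsSLFilter F₀ :=
    filterGen_isFilter (hF.1.mono Set.subset_union_left)
  -- Zorn's lemma on the collection S
  set S : Set (Set B) := {H | IsSLFilter H ∧ F₀ ⊆ H ∧ Disjoint H (f '' Gᶜ)} with hSdef
  have hF₀S : F₀ ∈ S := ⟨hF₀fil, subset_refl _, h2⟩
  obtain ⟨H, -, hHmax⟩ : ∃ H, F₀ ⊆ H ∧ Maximal (· ∈ S) H := by
    apply zorn_subset_nonempty S ?_ F₀ hF₀S
    intro c hcS hchain hcne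
    obtain ⟨H₀, hH₀c⟩ := hcne
    refine ⟨⋃₀ c, ⟨⟨?_, ?_, ?_⟩, ?_, ?_⟩, fun H hH => Set.subset_sUnion_of_mem hH⟩
    · obtain ⟨x, hx⟩ := (hcS hH₀c).1.1
      exact ⟨x, H₀, hH₀c, hx⟩
    · rintro a b ⟨K, hKc, haK⟩ hab
      exact ⟨K, hKc, (hcS hKc).1.2.1 a b haK hab⟩
    · rintro a b ⟨K, hKc, haK⟩ ⟨L, hLc, hbL⟩
      rcases hchain.total hKc hLc with h | h
      · exact ⟨L, hLc, (hcS hLc).1.2.2 a b (h haK) hbL⟩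
      · exact ⟨K, hKc, (hcS hKc).1.2.2 a b haK (h hbL)⟩
    · exact (hcS hH₀c).2.1.trans (Set.subset_sUnion_of_mem hH₀c)
    · rw [Set.disjoint_sUnion_left]
      exact fun K hKc => (hcS hKc).2.2
  obtain ⟨⟨hHfil, hF₀H, hHdisj⟩, hHmax'⟩ := hHmax
  obtain ⟨hHne, hHup, hHinf⟩ := hHfil
  have hFH : F ⊆ H := (Set.subset_union_left.trans subset_filterGen).trans hF₀H
  have hfGH : f '' G ⊆ H := (Set.subset_union_right.trans subset_filterGen).trans hF₀H
  -- G = f ⁻¹' H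
  have hGpre : G = f ⁻¹' H := by
    apply Set.Subset.antisymm
    · intro a ha; exact hfGH ⟨a, ha, rfl⟩
    · intro a ha
      by_contra hag
      exact (hHdisj.ne_of_mem ha ⟨a, hag, rfl⟩) rfl
  refine ⟨H, ⟨⟨hHne, hHup, hHinf⟩, ?_, ?_⟩, hFH, hGpre⟩
  · -- proper
    intro hHuniv
    obtain ⟨a, haG⟩ : ∃ a, a ∉ G := by
      by_contra h; push_neg at h
      exact hGprop (Set.eq_univ_of_forall h)
    exact (hHdisj.ne_of_mem (by rw [hHuniv]; trivial) ⟨a, haG, rfl⟩) rfl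
  · -- meet irreducible
    intro H₁ H₂ hH₁ hH₂ hHeq
    by_contra hcon
    push_neg at hcon
    obtain ⟨hne₁, hne₂⟩ := hcon
    have hHsub₁ : H ⊆ H₁ := hHeq ▸ Set.inter_subset_left
    have hHsub₂ : H ⊆ H₂ := hHeq ▸ Set.inter_subset_right
    -- each Hᵢ meets f '' Gᶜ, since H is maximal in S
    have key : ∀ H' : Set B, IsSLFilter H' → H ⊆ H' → H ≠ H' →
        ∃ a, a ∉ G ∧ f a ∈ H' := by
      intro H' hH'fil hsub hne
      by_contra h; push_neg at h
      have : H' ∈ S := by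
        refine ⟨hH'fil, hF₀H.trans hsub, ?_⟩
        rw [Set.disjoint_right]
        rintro b ⟨a, haG, rfl⟩ hbH'
        exact h a haG hbH'
      exact hne (Set.Subset.antisymm hsub (hHmax' this hsub))
    obtain ⟨a₁, ha₁G, ha₁H⟩ := key H₁ hH₁ hHsub₁ hne₁
    obtain ⟨a₂, ha₂G, ha₂H⟩ := key H₂ hH₂ hHsub₂ hne₂
    -- define G₁ G₂ filters in A
    set G₁ : Set A := {a | ∃ g ∈ G, ∃ b : A, f b ∈ H₁ ∧ g ⊓ b ≤ a} with hG₁def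
    set G₂ : Set A := {a | ∃ g ∈ G, ∃ b : A, f b ∈ H₂ ∧ g ⊓ b ≤ a} with hG₂def
    have mkfil : ∀ (H' : Set B), IsSLFilter H' → H ⊆ H' →
        IsSLFilter {a | ∃ g ∈ G, ∃ b : A, f b ∈ H' ∧ g ⊓ b ≤ a} := by
      intro H' hH'fil hsub
      obtain ⟨g₀, hg₀⟩ := hGne
      refine ⟨⟨g₀, g₀, hg₀, g₀, hsub (hfGH ⟨g₀, hg₀, rfl⟩), by simp⟩, ?_, ?_⟩
      · rintro a b ⟨g, hg, c, hc, hle⟩ hab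
        exact ⟨g, hg, c, hc, hle.trans hab⟩
      · rintro a b ⟨g, hg, c, hc, hle⟩ ⟨g', hg', c', hc', hle'⟩
        refine ⟨g ⊓ g', hGinf _ _ hg hg', c ⊓ c', ?_, ?_⟩
        · rw [hf]; exact hH'fil.2.2 _ _ hc hc'
        · calc (g ⊓ g') ⊓ (c ⊓ c') ≤ (g ⊓ c) ⊓ (g' ⊓ c') :=
                le_inf (inf_le_inf inf_le_left inf_le_left)
                  (inf_le_inf inf_le_right inf_le_right)
              _ ≤ a ⊓ b := inf_le_inf hle hle'
    have hmono : ∀ x y : A, x ≤ y → f x ≤ f y := by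
      intro x y hxy
      have : x ⊓ y = x := inf_eq_left.mpr hxy
      calc f x = f (x ⊓ y) := by rw [this]
        _ = f x ⊓ f y := hf x y
        _ ≤ f y := inf_le_right
    have hG₁fil : IsSLFilter G₁ := mkfil H₁ hH₁ hHsub₁
    have hG₂fil : IsSLFilter G₂ := mkfil H₂ hH₂ hHsub₂
    have hsubG : ∀ (H' : Set B), H ⊆ H' → ∀ a ∈ G,
        a ∈ {a | ∃ g ∈ G, ∃ b : A, f b ∈ H' ∧ g ⊓ b ≤ a} := by
      intro H' hsub a ha
      exact ⟨a, ha, a, hsub (hfGH ⟨a, ha, rfl⟩), inf_le_left⟩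
    have hGeq : G = G₁ ∩ G₂ := by
      apply Set.Subset.antisymm
      · exact fun a ha => ⟨hsubG H₁ hHsub₁ a ha, hsubG H₂ hHsub₂ a ha⟩
      · rintro a ⟨⟨g, hg, c, hc, hle⟩, ⟨g', hg', c', hc', hle'⟩⟩
        have h₁ : f a ∈ H₁ := hH₁.2.1 _ _
          (by rw [hf]; exact hH₁.2.2 _ _ (hHsub₁ (hfGH ⟨g, hg, rfl⟩)) hc) (hmono _ _ hle)
        have h₂ : f a ∈ H₂ := hH₂.2.1 _ _
          (by rw [hf]; exact hH₂.2.2 _ _ (hHsub₂ (hfGH ⟨g', hg', rfl⟩)) hc') (hmono _ _ hle')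
        have : f a ∈ H := hHeq ▸ ⟨h₁, h₂⟩
        rw [hGpre]; exact this
    rcases hGirr G₁ G₂ hG₁fil hG₂fil hGeq with h | h
    · obtain ⟨g₀, hg₀⟩ := hGne
      exact ha₁G (h ▸ (⟨g₀, hg₀, a₁, ha₁H, inf_le_right⟩ : a₁ ∈ G₁))
    · obtain ⟨g₀, hg₀⟩ := hGne
      exact ha₂G (h ▸ (⟨g₀, hg₀, a₂, ha₂H, inf_le_right⟩ : a₂ ∈ G₂))
end

section
/- Let A and B be pseudocomplemented semilattices, f : A → B a homomorphism (preserving ∧, ¬, 0, 1), F a filter of B, and G a maximal proper filter of A. If f⁻¹[F] ⊆ G, then the filter of B generated by F ∪ f[G] is disjoint from f[A ∖ G]. -/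
namespace IsSLFilter

variable {A : Type*} [SemilatticeInf A] {F : Set A}

lemma infClosed (hF : IsSLFilter F) : InfClosed F :=
  fun a ha b hb => hF.2.2 a b ha hb

lemma eq_univ_of_bot_mem [OrderBot A] (hF : IsSLFilter F) (h : ⊥ ∈ F) : F = Set.univ :=
  Set.eq_univ_of_forall fun a => hF.2.1 ⊥ a h bot_le

lemma filterGen_subset {X : Set A} (hF : IsSLFilter F) (hXF : X ⊆ F) : filterGen X ⊆ F := by
  rintro b ⟨s, hs, hsX, hsb⟩
  exact hF.2.1 _ b (hF.infClosed.finsetInf'_mem hs fun x hx => hXF (hsX hx)) hsb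

end IsSLFilter

section FilterJoin

variable {A : Type*} [SemilatticeInf A] {X Y : Set A}

/-- For filters `X` and `Y` this is their join in the lattice of filters. -/
def filterJoin (X Y : Set A) : Set A :=
  {b | ∃ x ∈ X, ∃ y ∈ Y, x ⊓ y ≤ b}

lemma isSLFilter_filterJoin (hX : X.Nonempty) (hY : Y.Nonempty) (hXinf : InfClosed X)
    (hYinf : InfClosed Y) : IsSLFilter (filterJoin X Y) := by
  obtain ⟨x, hx⟩ := hX
  obtain ⟨y, hy⟩ := hY
  refine ⟨⟨x ⊓ y, x, hx, y, hy, le_rfl⟩, ?_, ?_⟩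
  · rintro b c ⟨x, hx, y, hy, hxy⟩ hbc
    exact ⟨x, hx, y, hy, hxy.trans hbc⟩
  · rintro b c ⟨x₁, hx₁, y₁, hy₁, h₁⟩ ⟨x₂, hx₂, y₂, hy₂, h₂⟩
    refine ⟨x₁ ⊓ x₂, hXinf hx₁ hx₂, y₁ ⊓ y₂, hYinf hy₁ hy₂, le_inf ?_ ?_⟩
    · exact le_trans (inf_le_inf inf_le_left inf_le_left) h₁
    · exact le_trans (inf_le_inf inf_le_right inf_le_right) h₂

lemma left_subset_filterJoin (hY : Y.Nonempty) : X ⊆ filterJoin X Y := by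
  obtain ⟨y, hy⟩ := hY
  exact fun x hx => ⟨x, hx, y, hy, inf_le_left⟩

lemma right_subset_filterJoin (hX : X.Nonempty) : Y ⊆ filterJoin X Y := by
  obtain ⟨x, hx⟩ := hX
  exact fun y hy => ⟨x, hx, y, hy, inf_le_right⟩

lemma filterGen_union_subset_filterJoin (hX : X.Nonempty) (hY : Y.Nonempty)
    (hXinf : InfClosed X) (hYinf : InfClosed Y) : filterGen (X ∪ Y) ⊆ filterJoin X Y :=
  (isSLFilter_filterJoin hX hY hXinf hYinf).filterGen_subset
    (Set.union_subset (left_subset_filterJoin hY) (right_subset_filterJoin hX))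

end FilterJoin

section Pseudocomplement

variable {A : Type*} [SemilatticeInf A] [OrderBot A] {p : A → A}
  (hp : ∀ c a : A, c ⊓ a = ⊥ ↔ c ≤ p a)
include hp

lemma pcomp_inf_self (a : A) : p a ⊓ a = ⊥ :=
  (hp _ _).mpr le_rfl

lemma inf_pcomp_self (a : A) : a ⊓ p a = ⊥ := by
  rw [inf_comm]
  exact pcomp_inf_self hp a

lemma pcomp_notMem_of_mem {G : Set A} (hG : IsSLFilter G) (hGproper : G ≠ Set.univ) {a : A}
    (ha : a ∈ G) : p a ∉ G := fun hpa =>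
  hGproper (hG.eq_univ_of_bot_mem (pcomp_inf_self hp a ▸ hG.2.2 _ _ hpa ha))

/-- Maximality forces `filterJoin G {a} = univ` when `a ∉ G`, so some `g ∈ G` has `g ⊓ a = ⊥`. -/
lemma pcomp_mem_of_notMem {G : Set A} (hG : IsSLFilter G)
    (hGmax : ∀ G' : Set A, IsSLFilter G' → G' ≠ Set.univ → G ⊆ G' → G = G')
    {a : A} (ha : a ∉ G) : p a ∈ G := by
  have hJ : IsSLFilter (filterJoin G {a}) :=
    isSLFilter_filterJoin hG.1 (Set.singleton_nonempty a) hG.infClosed infClosed_singleton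
  have hJuniv : filterJoin G {a} = Set.univ := by
    by_contra hne
    have hGJ := hGmax _ hJ hne (left_subset_filterJoin (Set.singleton_nonempty a))
    exact ha (hGJ ▸ right_subset_filterJoin hG.1 rfl)
  obtain ⟨g, hg, y, (hy : y = a), hga⟩ : (⊥ : A) ∈ filterJoin G {a} := hJuniv ▸ Set.mem_univ _
  rw [hy, le_bot_iff] at hga
  exact hG.2.1 g _ hg ((hp g a).mp hga)

end Pseudocomplement

theorem stmt9_general {A B : Type*} [SemilatticeInf A] [BoundedOrder A]
    [SemilatticeInf B] [BoundedOrder B]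
    (pcompA : A → A) (hresA : ∀ c a : A, c ⊓ a = ⊥ ↔ c ≤ pcompA a)
    (pcompB : B → B) (hresB : ∀ c a : B, c ⊓ a = ⊥ ↔ c ≤ pcompB a)
    (f : A → B)
    (hfinf : ∀ a b : A, f (a ⊓ b) = f a ⊓ f b)
    (hfneg : ∀ a : A, f (pcompA a) = pcompB (f a))
    (F : Set B) (hF : IsSLFilter F)
    (G : Set A) (hG : IsSLFilter G) (hGproper : G ≠ Set.univ)
    (hGmax : ∀ G' : Set A, IsSLFilter G' → G' ≠ Set.univ → G ⊆ G' → G = G')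
    (h1 : f ⁻¹' F ⊆ G) :
    Disjoint (filterGen (F ∪ f '' G)) (f '' Gᶜ) := by
  rw [Set.disjoint_left]
  rintro _ hb ⟨a, ha, rfl⟩
  have hfG : InfClosed (f '' G) := hG.infClosed.image (InfHom.mk f hfinf)
  obtain ⟨x, hx, _, ⟨g, hg, rfl⟩, hxg⟩ :=
    filterGen_union_subset_filterJoin hF.1 (hG.1.image f) hF.infClosed hfG hb
  set c := g ⊓ pcompA a
  have hc : c ∈ G := hG.2.2 _ _ hg (pcomp_mem_of_notMem hresA hG hGmax ha)
  have hxc : x ≤ f (pcompA c) := by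
    rw [hfneg, ← hresB, eq_bot_iff, ← inf_pcomp_self hresB (f a), hfinf, hfneg, ← inf_assoc]
    exact inf_le_inf_right _ hxg
  exact pcomp_notMem_of_mem hresA hG hGproper hc (h1 (hF.2.1 _ _ hx hxc))

/-- Let `A`, `B` be pseudocomplemented semilattices and
`f : A → B` a homomorphism (preserving `⊓`, `¬`, `0`, `1`), `F` a filter of
`B`, and `G` a maximal proper filter of `A`. If `f⁻¹[F] ⊆ G`, then the filter
of `B` generated by `F ∪ f[G]` is disjoint from `f[A ∖ G]`. -/
theorem stmt9 {A B : Type*} [SemilatticeInf A] [BoundedOrder A]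
    [SemilatticeInf B] [BoundedOrder B]
    (pcompA : A → A) (hresA : ∀ c a : A, c ⊓ a = ⊥ ↔ c ≤ pcompA a)
    (pcompB : B → B) (hresB : ∀ c a : B, c ⊓ a = ⊥ ↔ c ≤ pcompB a)
    (f : A → B)
    (hfinf : ∀ a b : A, f (a ⊓ b) = f a ⊓ f b)
    (hfneg : ∀ a : A, f (pcompA a) = pcompB (f a))
    (hfbot : f ⊥ = ⊥) (hftop : f ⊤ = ⊤)
    (F : Set B) (hF : IsSLFilter F)
    (G : Set A) (hG : IsSLFilter G) (hGproper : G ≠ Set.univ)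
    (hGmax : ∀ G' : Set A, IsSLFilter G' → G' ≠ Set.univ → G ⊆ G' → G = G')
    (h1 : f ⁻¹' F ⊆ G) :
    Disjoint (filterGen (F ∪ f '' G)) (f '' Gᶜ) :=
  stmt9_general pcompA hresA pcompB hresB f hfinf hfneg F hF G hG hGproper hGmax h1
end

section
/- Let A and B be implicative semilattices, f : A → B a homomorphism (preserving ∧ and →), F a filter of B, and G a filter of A. If f⁻¹[F] ⊆ G, then the filter of B generated by F ∪ f[G] is disjoint from f[A ∖ G]. -/
/-! An element of the filter generated by `F ∪ f[G]` lies above some `x ⊓ f g` with `x ∈ F` and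
`g ∈ G`. If it is also `f a`, residuation gives `x ≤ f g → f a = f (g → a)`, so `g → a ∈ f⁻¹[F] ⊆ G`,
and modus ponens `g ⊓ (g → a) ≤ a` puts `a` in `G`. -/

lemma IsSLFilter.infClosed_s10 {A : Type*} [SemilatticeInf A] {F : Set A} (hF : IsSLFilter F) :
    InfClosed F :=
  fun _ ha _ hb => hF.2.2 _ _ ha hb

lemma InfClosed.image_of_map_inf {A B : Type*} [SemilatticeInf A] [SemilatticeInf B]
    {G : Set A} (hG : InfClosed G) {f : A → B} (hf : ∀ a b : A, f (a ⊓ b) = f a ⊓ f b) :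
    InfClosed (f '' G) := by
  rintro _ ⟨a, ha, rfl⟩ _ ⟨b, hb, rfl⟩
  exact ⟨a ⊓ b, hG ha hb, hf a b⟩

lemma exists_inf_le_of_mem_filterGen_union {A : Type*} [SemilatticeInf A] {F H : Set A}
    (hF : F.Nonempty) (hFi : InfClosed F) (hH : H.Nonempty) (hHi : InfClosed H) {b : A}
    (hb : b ∈ filterGen (F ∪ H)) : ∃ x ∈ F, ∃ y ∈ H, x ⊓ y ≤ b := by
  obtain ⟨s, hs, hsub, hle⟩ := hb
  obtain ⟨x₀, hx₀⟩ := hF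
  obtain ⟨y₀, hy₀⟩ := hH
  have hclosed : InfClosed {c | ∃ x ∈ F, ∃ y ∈ H, x ⊓ y ≤ c} := by
    rintro c ⟨x, hx, y, hy, hc⟩ d ⟨x', hx', y', hy', hd⟩
    refine ⟨x ⊓ x', hFi hx hx', y ⊓ y', hHi hy hy', le_inf ?_ ?_⟩
    · exact le_trans (inf_le_inf inf_le_left inf_le_left) hc
    · exact le_trans (inf_le_inf inf_le_right inf_le_right) hd
  obtain ⟨x, hx, y, hy, hxy⟩ := hclosed.finsetInf'_mem hs fun c hc => by
    rcases hsub hc with hcF | hcH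
    · exact ⟨c, hcF, y₀, hy₀, inf_le_left⟩
    · exact ⟨x₀, hx₀, c, hcH, inf_le_right⟩
  exact ⟨x, hx, y, hy, hxy.trans hle⟩

/-- Let `A`, `B` be implicative semilattices and `f : A → B` a
homomorphism (preserving `⊓` and `→`), `F` a filter of `B`, and `G` a filter
of `A`. If `f⁻¹[F] ⊆ G`, then the filter of `B` generated by `F ∪ f[G]` is
disjoint from `f[A ∖ G]`. -/
theorem stmt10 {A B : Type*} [SemilatticeInf A] [SemilatticeInf B]
    (himpA : A → A → A) (hresA : ∀ a b c : A, c ⊓ a ≤ b ↔ c ≤ himpA a b)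
    (himpB : B → B → B) (hresB : ∀ a b c : B, c ⊓ a ≤ b ↔ c ≤ himpB a b)
    (f : A → B)
    (hfinf : ∀ a b : A, f (a ⊓ b) = f a ⊓ f b)
    (hfimp : ∀ a b : A, f (himpA a b) = himpB (f a) (f b))
    (F : Set B) (hF : IsSLFilter F)
    (G : Set A) (hG : IsSLFilter G)
    (h1 : f ⁻¹' F ⊆ G) :
    Disjoint (filterGen (F ∪ f '' G)) (f '' Gᶜ) := by
  rw [Set.disjoint_left]
  rintro _ hb ⟨a, ha, rfl⟩
  obtain ⟨x, hx, _, ⟨g, hg, rfl⟩, hle⟩ := exists_inf_le_of_mem_filterGen_union hF.1 hF.infClosed_s10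
    (hG.1.image f) (hG.infClosed_s10.image_of_map_inf hfinf) hb
  have himp_mem : himpA g a ∈ G := by
    apply h1
    rw [Set.mem_preimage, hfimp]
    exact hF.2.1 x _ hx ((hresB _ _ _).mp hle)
  have modus_ponens : g ⊓ himpA g a ≤ a := by
    rw [inf_comm]
    exact (hresA g a _).mpr le_rfl
  exact ha (hG.2.1 _ _ (hG.2.2 _ _ hg himp_mem) modus_ponens)
end

section
/- If p : X ⇀ Y is a partial negative p-morphism between posets, then the map U ↦ X ∖ ↓p⁻¹[Y ∖ U] from upsets of Y to upsets of X preserves binary intersections and the pseudocomplement operation ¬U := X ∖ ↓U of the pseudocomplemented semilattices of upsets. -/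
/-- The downward closure of a subset of a poset. -/
def dcl {X : Type*} [PartialOrder X] (S : Set X) : Set X :=
  {x | ∃ s ∈ S, x ≤ s}

lemma mem_dcl {Z : Type*} [PartialOrder Z] (S : Set Z) (x : Z) :
    x ∈ dcl S ↔ ∃ s, s ∈ S ∧ x ≤ s := Iff.rfl

/-- If `p : X ⇀ Y` (modelled by a domain `dom ⊆ X` and a
function `p`) is a partial negative p-morphism between posets, then the map
`U ↦ X ∖ ↓p⁻¹[Y ∖ U]` from upsets of `Y` to upsets of `X` preserves binary
intersections and the pseudocomplement `¬U := X ∖ ↓U` of the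
pseudocomplemented semilattices of upsets. -/
theorem stmt12 {X Y : Type*} [PartialOrder X] [PartialOrder Y]
    (dom : Set X) (p : X → Y)
    (hmono : ∀ x z : X, x ∈ dom → z ∈ dom → x ≤ z → p x ≤ p z)
    (hcof : ∀ x : X, ∃ z : X, x ≤ z ∧ ∀ w : X, z ≤ w → w ∈ dom)
    (hback : ∀ x : X, x ∈ dom → ∀ y : Y, p x ≤ y →
      ∃ z : X, z ∈ dom ∧ x ≤ z ∧ y ≤ p z) :
    ∀ U V : Set Y, IsUpperSet U → IsUpperSet V →
      ((dcl {x | x ∈ dom ∧ p x ∈ (U ∩ V)ᶜ})ᶜ =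
        (dcl {x | x ∈ dom ∧ p x ∈ Uᶜ})ᶜ ∩ (dcl {x | x ∈ dom ∧ p x ∈ Vᶜ})ᶜ) ∧
      ((dcl {x | x ∈ dom ∧ p x ∈ ((dcl U)ᶜ)ᶜ})ᶜ =
        (dcl ((dcl {x | x ∈ dom ∧ p x ∈ Uᶜ})ᶜ))ᶜ) := by
  intro U V hU hV
  constructor
  · ext x
    simp only [Set.mem_compl_iff, Set.mem_inter_iff, mem_dcl, Set.mem_setOf_eq, not_exists]
    constructor
    · intro h
      refine ⟨fun s hs => ?_, fun s hs => ?_⟩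
      · exact h s ⟨⟨hs.1.1, fun hm => hs.1.2 hm.1⟩, hs.2⟩
      · exact h s ⟨⟨hs.1.1, fun hm => hs.1.2 hm.2⟩, hs.2⟩
    · rintro ⟨h1, h2⟩ s ⟨⟨hsd, hsn⟩, hle⟩
      rcases not_and_or.mp hsn with h | h
      · exact h1 s ⟨⟨hsd, h⟩, hle⟩
      · exact h2 s ⟨⟨hsd, h⟩, hle⟩
  · have key : dcl {x | x ∈ dom ∧ p x ∈ ((dcl U)ᶜ)ᶜ}
        = dcl ((dcl {x | x ∈ dom ∧ p x ∈ Uᶜ})ᶜ) := by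
      ext x
      simp only [mem_dcl, Set.mem_setOf_eq, Set.mem_compl_iff, not_not, not_exists]
      constructor
      · rintro ⟨s, ⟨hsd, hs⟩, hxs⟩
        obtain ⟨u, hu⟩ := not_forall.mp hs
        rw [not_not] at hu
        obtain ⟨hu, hpu⟩ := hu
        obtain ⟨z, hzd, hsz, hupz⟩ := hback s hsd u hpu
        refine ⟨z, fun c hc => ?_, hxs.trans hsz⟩
        exact hc.1.2 (hU (hmono z c hzd hc.1.1 hc.2) (hU hupz hu))
      · rintro ⟨t, ht, hxt⟩
        obtain ⟨z, htz, hz⟩ := hcof t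
        have hzd := hz z le_rfl
        have hpz : p z ∈ U := by
          by_contra hpz
          exact ht z ⟨⟨hzd, hpz⟩, htz⟩
        refine ⟨z, ⟨hzd, ?_⟩, hxt.trans htz⟩
        exact fun h => h (p z) ⟨hpz, le_rfl⟩
    rw [key]
end

section
/- If p : X ⇀ Y is a surjective partial function between posets that is order preserving on its domain, then the induced map U ↦ X ∖ ↓p⁻¹[Y ∖ U] from upsets of Y to upsets of X is injective. -/
/-- If `p : X ⇀ Y` (modelled by a domain `dom ⊆ X` and a
function `p`) is a surjective partial function between posets that is order
preserving on its domain, then the induced map `U ↦ X ∖ ↓p⁻¹[Y ∖ U]` from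
upsets of `Y` to upsets of `X` is injective. -/
theorem stmt13 {X Y : Type*} [PartialOrder X] [PartialOrder Y]
    (dom : Set X) (p : X → Y)
    (hmono : ∀ x z : X, x ∈ dom → z ∈ dom → x ≤ z → p x ≤ p z)
    (hsurj : ∀ y : Y, ∃ x ∈ dom, p x = y) :
    ∀ U V : Set Y, IsUpperSet U → IsUpperSet V →
      (dcl {x | x ∈ dom ∧ p x ∈ Uᶜ})ᶜ = (dcl {x | x ∈ dom ∧ p x ∈ Vᶜ})ᶜ →
      U = V := by
  have key : ∀ U V : Set Y, IsUpperSet U →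
      dcl {x | x ∈ dom ∧ p x ∈ Uᶜ} = dcl {x | x ∈ dom ∧ p x ∈ Vᶜ} →
      U ⊆ V := by
    intro U V hU h y hy
    by_contra hyV
    obtain ⟨x, hx, rfl⟩ := hsurj y
    have : x ∈ dcl {x | x ∈ dom ∧ p x ∈ Vᶜ} := ⟨x, ⟨hx, hyV⟩, le_refl x⟩
    rw [← h] at this
    obtain ⟨s, ⟨hs, hps⟩, hxs⟩ := this
    exact hps (hU (hmono x s hx hs hxs) hy)
  intro U V hU hV h
  have h' := congrArg compl h
  simp only [compl_compl] at h'
  exact Set.Subset.antisymm (key U V hU h') (key V U hV h'.symm)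
end

section
/- Let f : A → B be an injective homomorphism of meet-semilattices with top (preserving ∧ and 1). Then the induced partial map f₊ : B₊ ⇀ A₊, sending a meet-irreducible filter H of B with f⁻¹[H] meet irreducible to f⁻¹[H], is surjective onto the meet-irreducible filters of A. -/
/-- If `f : A → B` is an injective homomorphism of
meet-semilattices with top (preserving `⊓` and `⊤`), then the induced partial
map `f₊ : B₊ ⇀ A₊` (sending a meet-irreducible filter `H` of `B` with
`f⁻¹[H]` meet irreducible to `f⁻¹[H]`) is surjective onto the
meet-irreducible filters of `A`. -/
theorem stmt14 {A B : Type*} [SemilatticeInf A] [OrderTop A]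
    [SemilatticeInf B] [OrderTop B] (f : A → B)
    (hfinf : ∀ a b : A, f (a ⊓ b) = f a ⊓ f b) (hftop : f ⊤ = ⊤)
    (hinj : Function.Injective f) :
    ∀ G : Set A, IsMeetIrredFilter G →
      ∃ H : Set B, IsMeetIrredFilter H ∧ f ⁻¹' H = G := by
  intro G hG
  obtain ⟨⟨hGne, hGup, hGinf⟩, hGproper, hGirr⟩ := hG
  -- f is monotone and order-reflecting
  have hmono : ∀ a b : A, a ≤ b → f a ≤ f b := by
    intro a b hab
    have : a ⊓ b = a := inf_eq_left.mpr hab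
    calc f a = f (a ⊓ b) := by rw [this]
      _ = f a ⊓ f b := hfinf a b
      _ ≤ f b := inf_le_right
  have hrefl : ∀ a b : A, f a ≤ f b → a ≤ b := by
    intro a b hab
    have h1 : f (a ⊓ b) = f a := by rw [hfinf]; exact inf_eq_left.mpr hab
    exact inf_eq_left.mp (hinj h1)
  -- preimages of filters are filters
  have hpre : ∀ H : Set B, IsSLFilter H → IsSLFilter (f ⁻¹' H) := by
    intro H ⟨⟨b, hb⟩, hup, hmeet⟩
    refine ⟨⟨⊤, ?_⟩, ?_, ?_⟩
    · show f ⊤ ∈ H; rw [hftop]; exact hup b ⊤ hb le_top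
    · intro a c ha hac; exact hup _ _ ha (hmono _ _ hac)
    · intro a c ha hc; show f (a ⊓ c) ∈ H; rw [hfinf]; exact hmeet _ _ ha hc
  -- the base filter H₀
  set H₀ : Set B := {b | ∃ g ∈ G, f g ≤ b} with hH₀def
  have hH₀filter : IsSLFilter H₀ := by
    obtain ⟨g₀, hg₀⟩ := hGne
    refine ⟨⟨f g₀, g₀, hg₀, le_rfl⟩, ?_, ?_⟩
    · rintro a b ⟨g, hg, hle⟩ hab; exact ⟨g, hg, hle.trans hab⟩
    · rintro a b ⟨g, hg, hle⟩ ⟨g', hg', hle'⟩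
      exact ⟨g ⊓ g', hGinf _ _ hg hg', by rw [hfinf]; exact inf_le_inf hle hle'⟩
  have hH₀pre : f ⁻¹' H₀ = G := by
    ext a
    constructor
    · rintro ⟨g, hg, hle⟩; exact hGup g a hg (hrefl _ _ hle)
    · intro ha; exact ⟨a, ha, le_rfl⟩
  -- Zorn's lemma on filters H with f⁻¹H = G
  set S : Set (Set B) := {H | IsSLFilter H ∧ f ⁻¹' H = G} with hSdef
  obtain ⟨M, -, hMmem, hMmax⟩ : ∃ M, H₀ ⊆ M ∧ Maximal (· ∈ S) M := by
    apply zorn_subset_nonempty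
    · intro c hcS hchain ⟨c₀, hc₀⟩
      refine ⟨⋃₀ c, ⟨⟨?_, ?_, ?_⟩, ?_⟩, fun s hs => Set.subset_sUnion_of_mem hs⟩
      · obtain ⟨b, hb⟩ := (hcS hc₀).1.1
        exact ⟨b, c₀, hc₀, hb⟩
      · rintro a b ⟨t, ht, hat⟩ hab
        exact ⟨t, ht, (hcS ht).1.2.1 a b hat hab⟩
      · rintro a b ⟨t, ht, hat⟩ ⟨u, hu, hbu⟩
        rcases hchain.total ht hu with h | h
        · exact ⟨u, hu, (hcS hu).1.2.2 a b (h hat) hbu⟩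
        · exact ⟨t, ht, (hcS ht).1.2.2 a b hat (h hbu)⟩
      · rw [Set.preimage_sUnion]
        apply Set.Subset.antisymm
        · apply Set.iUnion₂_subset
          intro t ht
          rw [(hcS ht).2]
        · obtain ⟨g, hg⟩ := hGne
          intro a ha
          rw [← (hcS hc₀).2] at ha
          exact Set.mem_iUnion₂.mpr ⟨c₀, hc₀, ha⟩
    · exact ⟨hH₀filter, hH₀pre⟩
  obtain ⟨hMfilter, hMpre⟩ := hMmem
  refine ⟨M, ⟨hMfilter, ?_, ?_⟩, hMpre⟩
  · -- M proper
    intro hMuniv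
    apply hGproper
    rw [← hMpre, hMuniv, Set.preimage_univ]
  · -- M meet-irreducible
    intro H₁ H₂ h₁ h₂ hM
    by_contra hne
    push_neg at hne
    obtain ⟨hne₁, hne₂⟩ := hne
    have hsub₁ : M ⊆ H₁ := hM ▸ Set.inter_subset_left
    have hsub₂ : M ⊆ H₂ := hM ▸ Set.inter_subset_right
    have hGsub₁ : G ⊆ f ⁻¹' H₁ := hMpre ▸ Set.preimage_mono hsub₁
    have hGsub₂ : G ⊆ f ⁻¹' H₂ := hMpre ▸ Set.preimage_mono hsub₂
    have key : G = f ⁻¹' H₁ ∩ f ⁻¹' H₂ := by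
      rw [← Set.preimage_inter, ← hM, hMpre]
    rcases hGirr _ _ (hpre _ h₁) (hpre _ h₂) key with h | h
    · exact hne₁ (Set.Subset.antisymm hsub₁ (hMmax ⟨h₁, h.symm⟩ hsub₁))
    · exact hne₂ (Set.Subset.antisymm hsub₂ (hMmax ⟨h₂, h.symm⟩ hsub₂))
end

section
/- For a poset X, the Heyting algebra of upsets Up(X) validates the weak excluded middle quasiequation (¬x ∧ y ≤ z & ¬¬x ∧ y ≤ z ⟹ y ≤ z) if and only if every principal upset ↑x of X is up-directed, i.e., for all y₁, y₂ ≥ x there exists z with z ≥ y₁ and z ≥ y₂. -/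
lemma dcl_compl_upper {X : Type*} [PartialOrder X] (S : Set X) :
    IsUpperSet (dcl S)ᶜ := by
  intro a b hab ha hb
  exact ha ⟨hb.choose, hb.choose_spec.1, hab.trans hb.choose_spec.2⟩

/-- For a poset `X`, the Heyting algebra of upsets `Up(X)`
(with `¬U = X ∖ ↓U`) validates the weak excluded middle quasiequation
`(¬x ∧ y ≤ z & ¬¬x ∧ y ≤ z ⟹ y ≤ z)` iff every principal upset `↑x` of `X`
is up-directed. -/
theorem stmt17 {X : Type*} [PartialOrder X] :
    (∀ U W V : Set X, IsUpperSet U → IsUpperSet W → IsUpperSet V →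
      (dcl U)ᶜ ∩ W ⊆ V → (dcl ((dcl U)ᶜ))ᶜ ∩ W ⊆ V → W ⊆ V) ↔
    (∀ x y₁ y₂ : X, x ≤ y₁ → x ≤ y₂ → ∃ z : X, y₁ ≤ z ∧ y₂ ≤ z) := by
  constructor
  · intro h x y₁ y₂ h1 h2
    by_contra hno
    push_neg at hno
    set U : Set X := Set.Ici y₁ with hU
    set W : Set X := Set.Ici x with hW
    set V : Set X := ((dcl U)ᶜ ∪ (dcl ((dcl U)ᶜ))ᶜ) ∩ W with hV
    have hx : x ∈ V := by
      refine h U W V (isUpperSet_Ici _) (isUpperSet_Ici _)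
        (((dcl_compl_upper U).union (dcl_compl_upper _)).inter (isUpperSet_Ici _))
        (fun a ha => ⟨Or.inl ha.1, ha.2⟩) (fun a ha => ⟨Or.inr ha.1, ha.2⟩)
        (le_refl x)
    rcases hx.1 with hc | hc
    · exact hc ⟨y₁, le_refl y₁, h1⟩
    · refine hc ⟨y₂, ?_, h2⟩
      intro ⟨s, hs, hys⟩
      exact hno s hs hys
  · intro hdir U W V hU hW hV hyp1 hyp2 w hw
    by_cases hc : w ∈ dcl U
    · by_cases hc2 : w ∈ dcl ((dcl U)ᶜ)
      · obtain ⟨s, hs, hws⟩ := hc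
        obtain ⟨t, ht, hwt⟩ := hc2
        obtain ⟨z, hsz, htz⟩ := hdir w s t hws hwt
        exact absurd ⟨z, hU hsz hs, htz⟩ ht
      · exact hyp2 ⟨hc2, hw⟩
    · exact hyp1 ⟨hc, hw⟩
end

section
/- For a poset X, the Heyting algebra Up(X) validates the quasiequation ((x₁ → x₂) ∧ y ≤ z & (x₂ → x₁) ∧ y ≤ z ⟹ y ≤ z) corresponding to the Gödel–Dummett axiom if and only if X is a root system, i.e., for every x ∈ X the upset ↑x is a chain. -/
/-- The Heyting implication of upsets of a poset: `U → V := X ∖ ↓(U ∖ V)`. -/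
def upImp {X : Type*} [PartialOrder X] (U V : Set X) : Set X :=
  (dcl (U \ V))ᶜ

/-- For a poset `X`, the Heyting algebra of upsets `Up(X)`
validates the Gödel–Dummett quasiequation
`((x₁ → x₂) ∧ y ≤ z & (x₂ → x₁) ∧ y ≤ z ⟹ y ≤ z)` iff `X` is a root system,
i.e., for every `x ∈ X` the upset `↑x` is a chain. -/
theorem stmt19 {X : Type*} [PartialOrder X] :
    (∀ U₁ U₂ W V : Set X, IsUpperSet U₁ → IsUpperSet U₂ → IsUpperSet W →
      IsUpperSet V → upImp U₁ U₂ ∩ W ⊆ V → upImp U₂ U₁ ∩ W ⊆ V → W ⊆ V) ↔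
    (∀ x : X, IsChain (· ≤ ·) (Set.Ici x)) := by
  constructor
  · intro H x a ha b hb hab
    by_contra hcomp
    push_neg at hcomp
    have hab' : ¬ a ≤ b := hcomp.1
    have hba' : ¬ b ≤ a := hcomp.2
    -- take U₁ = Ici a, U₂ = Ici b, W = Ici x, V = Ici x \ {x}
    have hV : IsUpperSet (Set.Ici x \ {x}) := by
      intro p q hpq hp
      refine ⟨le_trans hp.1 hpq, ?_⟩
      intro hq
      apply hp.2
      simp only [Set.mem_singleton_iff] at hq ⊢
      exact le_antisymm (hq ▸ hpq) hp.1
    have key := H (Set.Ici a) (Set.Ici b) (Set.Ici x) (Set.Ici x \ {x})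
      (isUpperSet_Ici a) (isUpperSet_Ici b) (isUpperSet_Ici x) hV
      (by
        rintro w ⟨hw1, hw2⟩
        refine ⟨hw2, ?_⟩
        intro hwx
        simp only [Set.mem_singleton_iff] at hwx
        apply hw1
        exact ⟨a, ⟨le_refl a, hba'⟩, hwx ▸ ha⟩)
      (by
        rintro w ⟨hw1, hw2⟩
        refine ⟨hw2, ?_⟩
        intro hwx
        simp only [Set.mem_singleton_iff] at hwx
        apply hw1
        exact ⟨b, ⟨le_refl b, hab'⟩, hwx ▸ hb⟩)
    exact (key (le_refl x)).2 rfl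
  · intro H U₁ U₂ W V hU₁ hU₂ hW hV h1 h2 w hw
    by_cases hc : w ∈ upImp U₁ U₂
    · exact h1 ⟨hc, hw⟩
    · refine h2 ⟨?_, hw⟩
      simp only [upImp, Set.mem_compl_iff, not_not] at hc
      obtain ⟨s₁, ⟨hs₁U, hs₁nU⟩, hws₁⟩ := hc
      intro hc2
      obtain ⟨s₂, ⟨hs₂U, hs₂nU⟩, hws₂⟩ := hc2
      rcases (H w hws₁ hws₂ (fun h => hs₂nU (h ▸ hs₁U))) with h | h
      · exact hs₂nU (hU₁ h hs₁U)
      · exact hs₁nU (hU₂ h hs₂U)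
end
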